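/- arXiv:2507.02553 — 5 statements merged into one kernel-verified Lean document; each statement's English description precedes it below -/
import Mathlib

section
/- For every λ ∈ ℂ*, α, β, γ ∈ ℂ and h(t) ∈ ℂ[t], the formulas L_m·f(s,t) = λ^m (s + h_m(t)) f(s−m,t) − m λ^m (t − mα) ∂_t(f(s−m,t)), M_m·f(s,t) = λ^m (t − mα) f(s−m,t), S_m·f(s,t) = λ^m β f(s−m,t), and I_m·f(s,t) = λ^m (γ − m β (h(t)−h(α))/(t−α)) f(s−m,t) + m λ^m β ∂_t(f(s−m,t)) define a module structure over the Lie algebra 𝔏 on the polynomial ring ℂ[s,t]; that is, X·(Y·f) − Y·(X·f) = [X,Y]·f for all basis elements X, Y of 𝔏 and all f ∈ ℂ[s,t]. -/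
noncomputable section

/-- The polynomial ring `ℂ[s,t]`; variable `0` is `s`, variable `1` is `t`. -/
abbrev P2 : Type := MvPolynomial (Fin 2) ℂ

/-- The shift operator `f(s,t) ↦ f(s-m,t)` on `ℂ[s,t]`. -/
def shiftS (m : ℤ) : Module.End ℂ P2 :=
  (MvPolynomial.aeval ![MvPolynomial.X 0 - MvPolynomial.C (m : ℂ), MvPolynomial.X 1] :
    P2 →ₐ[ℂ] P2).toLinearMap

/-- Multiplication by a polynomial, as a linear endomorphism of `ℂ[s,t]`. -/
def mulOp (p : P2) : Module.End ℂ P2 := LinearMap.mulLeft ℂ p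

/-- The partial derivative `∂/∂t` on `ℂ[s,t]`. -/
def dT : Module.End ℂ P2 := (MvPolynomial.pderiv (1 : Fin 2)).toLinearMap

/-- The embedding `ℂ[t] → ℂ[s,t]`, `t ↦` variable `1`. -/
def toT (p : Polynomial ℂ) : P2 := Polynomial.aeval (MvPolynomial.X 1 : P2) p

/-- The polynomial quotient `(h(t) - h(α)) / (t - α)`. -/
def hq (al : ℂ) (h : Polynomial ℂ) : Polynomial ℂ :=
  Polynomial.divByMonic (h - Polynomial.C (Polynomial.eval al h))
    (Polynomial.X - Polynomial.C al)

/-- `h_m(t) = m h(t) - m (m-1) α (h(t) - h(α))/(t - α)`. -/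
def hmPoly (al : ℂ) (h : Polynomial ℂ) (m : ℤ) : Polynomial ℂ :=
  (m : ℂ) • h - ((m : ℂ) * ((m : ℂ) - 1) * al) • hq al h

/-- The action of `L_m` on `Φ(λ,α,β,γ,h)`:
`L_m · f = λ^m (s + h_m(t)) f(s-m,t) - m λ^m (t - mα) ∂_t(f(s-m,t))`. -/
def opL (lam al : ℂ) (h : Polynomial ℂ) (m : ℤ) : Module.End ℂ P2 :=
  lam ^ m • (mulOp (MvPolynomial.X 0 + toT (hmPoly al h m)) * shiftS m)
    - ((m : ℂ) * lam ^ m) •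
        (mulOp (MvPolynomial.X 1 - MvPolynomial.C ((m : ℂ) * al)) * (dT * shiftS m))

/-- The action of `M_m` on `Φ(λ,α,β,γ,h)`: `M_m · f = λ^m (t - mα) f(s-m,t)`. -/
def opM (lam al : ℂ) (m : ℤ) : Module.End ℂ P2 :=
  lam ^ m • (mulOp (MvPolynomial.X 1 - MvPolynomial.C ((m : ℂ) * al)) * shiftS m)

/-- The action of `S_m` on `Φ(λ,α,β,γ,h)`: `S_m · f = λ^m β f(s-m,t)`. -/
def opS (lam be : ℂ) (m : ℤ) : Module.End ℂ P2 :=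
  (lam ^ m * be) • shiftS m

/-- The action of `I_m` on `Φ(λ,α,β,γ,h)`:
`I_m · f = λ^m (γ - m β (h(t)-h(α))/(t-α)) f(s-m,t) + m λ^m β ∂_t(f(s-m,t))`. -/
def opI (lam al be ga : ℂ) (h : Polynomial ℂ) (m : ℤ) : Module.End ℂ P2 :=
  lam ^ m •
      (mulOp (MvPolynomial.C ga - MvPolynomial.C ((m : ℂ) * be) * toT (hq al h)) * shiftS m)
    + ((m : ℂ) * lam ^ m * be) • (dT * shiftS m)



open MvPolynomial


lemma shift_mul (m : ℤ) (p q : P2) : shiftS m (p * q) = shiftS m p * shiftS m q := by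
  simp [shiftS]

lemma shift_X0 (m : ℤ) : shiftS m (X 0) = X 0 - C (m : ℂ) := by simp [shiftS]
lemma shift_X1 (m : ℤ) : shiftS m (X 1) = X 1 := by simp [shiftS]
lemma shift_C (m : ℤ) (a : ℂ) : shiftS m (C a : P2) = C a := by simp [shiftS]

lemma shift_shift (m n : ℤ) (f : P2) : shiftS m (shiftS n f) = shiftS (m + n) f := by
  have H : ((MvPolynomial.aeval ![X 0 - C (m : ℂ), X 1] : P2 →ₐ[ℂ] P2).comp
      (MvPolynomial.aeval ![X 0 - C (n : ℂ), X 1])) =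
      (MvPolynomial.aeval ![X 0 - C ((m + n : ℤ) : ℂ), X 1] : P2 →ₐ[ℂ] P2) := by
    apply MvPolynomial.algHom_ext
    intro i
    fin_cases i <;> simp <;> push_cast <;> ring
  have := congrArg (fun g : P2 →ₐ[ℂ] P2 => g f) H
  simpa [shiftS] using this

lemma pd0 : pderiv (1 : Fin 2) (X 0 : P2) = 0 := pderiv_X_of_ne (by decide)
lemma pd1 : pderiv (1 : Fin 2) (X 1 : P2) = 1 := pderiv_X_self 1

lemma shift_aeval1 (m : ℤ) (p : Polynomial ℂ) :
    shiftS m (Polynomial.aeval (X 1 : P2) p) = Polynomial.aeval (X 1 : P2) p := by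
  rw [shiftS, AlgHom.toLinearMap_apply, ← Polynomial.aeval_algHom_apply]
  simp

lemma pderiv_shift (m : ℤ) (f : P2) :
    pderiv (1 : Fin 2) (shiftS m f) = shiftS m (pderiv (1 : Fin 2) f) := by
  induction f using MvPolynomial.induction_on with
  | C a => simp [shift_C]
  | add p q hp hq => simp [map_add, hp, hq]
  | mul_X p i hp =>
      fin_cases i <;>
        simp [shift_mul, shift_X0, shift_X1, pderiv_mul, hp, pd0, pd1, map_sub, shift_C,
          map_add, mul_sub, sub_mul]

lemma pderiv_aeval1 (p : Polynomial ℂ) :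
    pderiv (1 : Fin 2) (Polynomial.aeval (X 1 : P2) p) =
      Polynomial.aeval (X 1 : P2) (Polynomial.derivative p) := by
  rw [Derivation.comp_aeval_eq, pd1, smul_eq_mul, mul_one]

lemma shift_one (m : ℤ) : shiftS m (1 : P2) = 1 := by simp [shiftS]

lemma dT_apply (f : P2) : dT f = pderiv (1 : Fin 2) f := rfl
lemma shiftS_smul (m : ℤ) (c : ℂ) (f : P2) : shiftS m (c • f) = c • shiftS m f := map_smul _ _ _


/-- For every `λ ∈ ℂ*`, `α, β, γ ∈ ℂ` and `h(t) ∈ ℂ[t]`, the given formulas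
define a module structure over the BMS-Kac-Moody algebra `𝔏` on `ℂ[s,t]`; that is,
`X∘Y - Y∘X = [X,Y]` holds for the operators attached to all basis elements `X, Y` of `𝔏`. -/
theorem stmt0 (lam : ℂ) (hlam : lam ≠ 0) (al be ga : ℂ) (h : Polynomial ℂ) :
    (∀ m n : ℤ, ⁅opL lam al h m, opL lam al h n⁆ = ((n : ℂ) - (m : ℂ)) • opL lam al h (m + n)) ∧
    (∀ m n : ℤ, ⁅opL lam al h m, opM lam al n⁆ = ((n : ℂ) - (m : ℂ)) • opM lam al (m + n)) ∧
    (∀ m n : ℤ, ⁅opL lam al h m, opS lam be n⁆ = (n : ℂ) • opS lam be (m + n)) ∧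
    (∀ m n : ℤ, ⁅opL lam al h m, opI lam al be ga h n⁆ = (n : ℂ) • opI lam al be ga h (m + n)) ∧
    (∀ m n : ℤ, ⁅opM lam al m, opI lam al be ga h n⁆ = -((n : ℂ) • opS lam be (m + n))) ∧
    (∀ m n : ℤ, ⁅opM lam al m, opM lam al n⁆ = 0) ∧
    (∀ m n : ℤ, ⁅opM lam al m, opS lam be n⁆ = 0) ∧
    (∀ m n : ℤ, ⁅opS lam be m, opS lam be n⁆ = 0) ∧
    (∀ m n : ℤ, ⁅opS lam be m, opI lam al be ga h n⁆ = 0) ∧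
    (∀ m n : ℤ, ⁅opI lam al be ga h m, opI lam al be ga h n⁆ = 0) := by
  have rel : (Polynomial.X - Polynomial.C al) * hq al h
      = h - Polynomial.C (Polynomial.eval al h) := by
    refine Polynomial.mul_divByMonic_eq_iff_isRoot.2 ?_
    simp [Polynomial.IsRoot]
  have relD : Polynomial.derivative h =
      hq al h + (Polynomial.X - Polynomial.C al) * Polynomial.derivative (hq al h) := by
    have hd := congrArg Polynomial.derivative rel
    simp only [Polynomial.derivative_mul, Polynomial.derivative_sub, Polynomial.derivative_X,
      Polynomial.derivative_C, sub_zero, one_mul] at hd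
    linear_combination -hd
  have R2 : Polynomial.aeval (X 1 : P2) (Polynomial.derivative h) =
      Polynomial.aeval (X 1 : P2) (hq al h)
        + (X 1 - C al) * Polynomial.aeval (X 1 : P2) (Polynomial.derivative (hq al h)) := by
    have hh := congrArg (Polynomial.aeval (X 1 : P2)) relD
    simpa using hh
  refine ⟨fun m n => ?_, fun m n => ?_, fun m n => ?_, fun m n => ?_, fun m n => ?_,
    fun m n => ?_, fun m n => ?_, fun m n => ?_, fun m n => ?_, fun m n => ?_⟩
  all_goals
    apply LinearMap.ext; intro f
    simp only [Ring.lie_def, LinearMap.sub_apply, Module.End.mul_apply, LinearMap.smul_apply,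
      LinearMap.add_apply, LinearMap.neg_apply, LinearMap.zero_apply,
      opL, opM, opS, opI, mulOp, LinearMap.mulLeft_apply, dT_apply, toT, hmPoly,
      map_add, map_sub, map_mul, map_one, map_smul, smul_eq_C_mul,
      shift_mul, shift_X0, shift_X1, shift_C, shift_one, shift_aeval1, shift_shift,
      pderiv_shift, pderiv_mul, pderiv_aeval1, pd0, pd1, pderiv_C, Derivation.map_one_eq_zero,
      zpow_add₀ hlam, Int.cast_add, R2]
    try rw [add_comm n m]
    ring1

end
end

section
/- For λ ∈ ℂ*, α, β, γ ∈ ℂ and h(t) ∈ ℂ[t], the 𝔏-module Φ(λ,α,β,γ,h(t)) is irreducible if and only if α ≠ 0 or β ≠ 0. -/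
noncomputable section

/-- `W` is an `𝔏`-submodule of `Φ(λ,α,β,γ,h)`: a subspace invariant under the action of all
`L_m, M_m, S_m, I_m`. -/
def IsLSubmodule (lam al be ga : ℂ) (h : Polynomial ℂ) (W : Submodule ℂ P2) : Prop :=
  ∀ (m : ℤ), ∀ f ∈ W, opL lam al h m f ∈ W ∧ opM lam al m f ∈ W ∧
    opS lam be m f ∈ W ∧ opI lam al be ga h m f ∈ W


open MvPolynomial

/-- shift as an algebra hom -/
def shA (m : ℤ) : P2 →ₐ[ℂ] P2 :=
  aeval ![X 0 - C (m : ℂ), X 1]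

lemma shiftS_eq (m : ℤ) (f : P2) : shiftS m f = shA m f := rfl

@[simp] lemma shA_X0 (m : ℤ) : shA m (X 0) = X 0 - C (m : ℂ) := by
  simp [shA]

@[simp] lemma shA_X1 (m : ℤ) : shA m (X 1) = X 1 := by
  simp [shA]

@[simp] lemma shA_C (m : ℤ) (c : ℂ) : shA m (C c) = C c := by
  simp [shA, algebraMap_eq]

@[simp] lemma shA_toT (m : ℤ) (p : Polynomial ℂ) : shA m (toT p) = toT p := by
  rw [toT, ← Polynomial.aeval_algHom_apply, shA_X1]

lemma shA_shA (m n : ℤ) (f : P2) : shA m (shA n f) = shA (m + n) f := by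
  have : (shA m).comp (shA n) = shA (m + n) := by
    apply algHom_ext
    intro i
    fin_cases i
    · simp [map_sub]; push_cast; ring
    · simp
  calc shA m (shA n f) = ((shA m).comp (shA n)) f := rfl
    _ = shA (m+n) f := by rw [this]

@[simp] lemma shA_zero (f : P2) : shA 0 f = f := by
  have : shA (0:ℤ) = AlgHom.id ℂ P2 := by
    apply algHom_ext
    intro i
    fin_cases i <;> simp
  rw [this]; rfl

lemma shA_dT (m : ℤ) (f : P2) : shA m (pderiv 1 f) = pderiv 1 (shA m f) := by
  induction f using MvPolynomial.induction_on with
  | C a => simp [pderiv_C]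
  | add p q hp hq => simp [map_add, hp, hq]
  | mul_X p i hp =>
      rw [pderiv_mul, map_add, map_mul, map_mul, map_mul, hp, pderiv_mul]
      fin_cases i <;> simp [map_sub]

lemma dT_eq (f : P2) : dT f = pderiv 1 f := rfl

lemma opL_apply (lam al : ℂ) (h : Polynomial ℂ) (m : ℤ) (f : P2) :
    opL lam al h m f = lam ^ m • ((X 0 + toT (hmPoly al h m)) * shA m f)
      - ((m : ℂ) * lam ^ m) • ((X 1 - C ((m : ℂ) * al)) * pderiv 1 (shA m f)) := by
  rfl

lemma opM_apply (lam al : ℂ) (m : ℤ) (f : P2) :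
    opM lam al m f = lam ^ m • ((X 1 - C ((m : ℂ) * al)) * shA m f) := rfl

lemma opS_apply (lam be : ℂ) (m : ℤ) (f : P2) :
    opS lam be m f = (lam ^ m * be) • shA m f := rfl

lemma opI_apply (lam al be ga : ℂ) (h : Polynomial ℂ) (m : ℤ) (f : P2) :
    opI lam al be ga h m f
      = lam ^ m • ((C ga - C ((m : ℂ) * be) * toT (hq al h)) * shA m f)
        + ((m : ℂ) * lam ^ m * be) • pderiv 1 (shA m f) := rfl

lemma coeff_pderiv (i : Fin 2) (u : Fin 2 →₀ ℕ) (f : P2) :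
    coeff u (pderiv i f) = ((u i : ℂ) + 1) * coeff (u + Finsupp.single i 1) f := by
  induction f using MvPolynomial.induction_on' with
  | add p q hp hq => simp only [map_add, coeff_add, hp, hq]; ring
  | monomial s a =>
    rw [pderiv_monomial, coeff_monomial, coeff_monomial]
    by_cases hs : s = u + Finsupp.single i 1
    · subst hs
      have h1 : u + Finsupp.single i 1 - Finsupp.single i 1 = u := by
        ext j
        simp [Finsupp.tsub_apply, Finsupp.add_apply]
      rw [if_pos h1, if_pos rfl, Finsupp.add_apply, Finsupp.single_eq_same]
      push_cast
      ring
    · rw [if_neg hs]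
      by_cases h2 : s - Finsupp.single i 1 = u
      · rw [if_pos h2]
        have hsi : s i = 0 := by
          by_contra hne
          apply hs
          ext j
          have hj := DFunLike.congr_fun h2 j
          rw [Finsupp.tsub_apply] at hj
          rw [Finsupp.add_apply]
          rcases eq_or_ne j i with rfl | hji
          · rw [Finsupp.single_eq_same] at hj ⊢; omega
          · rw [Finsupp.single_eq_of_ne' (Ne.symm hji)] at hj ⊢; omega
        rw [hsi]
        simp
      · rw [if_neg h2]; ring

lemma pderiv_lt (f : P2) (hdeg : degreeOf 1 f ≠ 0) :
    pderiv 1 f ≠ 0 ∧ degreeOf 1 (pderiv 1 f) < degreeOf 1 f := by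
  have hf0 : f ≠ 0 := by rintro rfl; simp [degreeOf_zero] at hdeg
  obtain ⟨m, hm, hmd⟩ : ∃ m ∈ f.support, degreeOf 1 f = m 1 := by
    have hne : f.support.Nonempty :=
      Finset.nonempty_iff_ne_empty.mpr (fun hemp => hf0 (support_eq_empty.mp hemp))
    obtain ⟨b, hb, he⟩ := Finset.exists_mem_eq_sup f.support hne (fun m => m 1)
    exact ⟨b, hb, by rw [degreeOf_eq_sup, he]⟩
  set u : Fin 2 →₀ ℕ := m - Finsupp.single 1 1 with hu
  have hmu : u + Finsupp.single 1 1 = m := by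
    ext j
    rw [Finsupp.add_apply, hu, Finsupp.tsub_apply]
    rcases eq_or_ne j 1 with rfl | hj
    · rw [Finsupp.single_eq_same]; omega
    · rw [Finsupp.single_eq_of_ne' (Ne.symm hj)]; omega
  have hco : coeff u (pderiv 1 f) ≠ 0 := by
    rw [_root_.coeff_pderiv, hmu]
    exact mul_ne_zero (Nat.cast_add_one_ne_zero (u 1)) (mem_support_iff.mp hm)
  constructor
  · intro hz; rw [hz] at hco; simp at hco
  · rw [degreeOf_lt_iff (Nat.pos_of_ne_zero hdeg)]
    intro v hv
    have hcv := mem_support_iff.mp hv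
    rw [_root_.coeff_pderiv] at hcv
    have : coeff (v + Finsupp.single 1 1) f ≠ 0 := by
      intro hz; rw [hz, mul_zero] at hcv; exact hcv rfl
    have := monomial_le_degreeOf 1 (mem_support_iff.mpr this)
    rw [Finsupp.add_apply, Finsupp.single_eq_same] at this
    omega

lemma exists_poly_of_degreeOf1_eq_zero (f : P2) (hdeg : degreeOf 1 f = 0) :
    ∃ p : Polynomial ℂ, f = Polynomial.aeval (X 0 : P2) p := by
  refine ⟨∑ m ∈ f.support, Polynomial.C (coeff m f) * Polynomial.X ^ (m 0), ?_⟩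
  rw [map_sum]
  conv_lhs => rw [← support_sum_monomial_coeff f]
  refine Finset.sum_congr rfl fun m hm => ?_
  have hm1 : m 1 = 0 := by
    have := monomial_le_degreeOf 1 hm
    omega
  have hms : m = Finsupp.single 0 (m 0) := by
    ext j
    fin_cases j
    · simp
    · simpa using hm1
  rw [map_mul, map_pow, Polynomial.aeval_X, Polynomial.aeval_C, algebraMap_eq,
    X_pow_eq_monomial, C_mul_monomial, mul_one]
  exact congrArg (fun s => monomial s (coeff m f)) hms

lemma comp_sub_lt (p : Polynomial ℂ) (hp : p.natDegree ≠ 0) :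
    (p.comp (Polynomial.X - Polynomial.C 1) - p) ≠ 0 ∧
      (p.comp (Polynomial.X - Polynomial.C 1) - p).natDegree < p.natDegree := by
  have hp0 : p ≠ 0 := fun hz => hp (by rw [hz]; simp)
  have hX1 : (Polynomial.X - Polynomial.C (1:ℂ)).natDegree = 1 := Polynomial.natDegree_X_sub_C 1
  have hnd : (p.comp (Polynomial.X - Polynomial.C 1)).natDegree = p.natDegree := by
    rw [Polynomial.natDegree_comp, hX1, mul_one]
  have hlc : (p.comp (Polynomial.X - Polynomial.C 1)).leadingCoeff = p.leadingCoeff := by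
    rw [Polynomial.leadingCoeff_comp (by rw [hX1]; norm_num),
      (Polynomial.monic_X_sub_C (1:ℂ)).leadingCoeff, one_pow, mul_one]
  have hpc0 : p.comp (Polynomial.X - Polynomial.C 1) ≠ 0 := by
    intro hz
    have := hlc
    rw [hz, Polynomial.leadingCoeff_zero] at this
    exact hp0 (Polynomial.leadingCoeff_eq_zero.mp this.symm)
  have hne : p.comp (Polynomial.X - Polynomial.C 1) - p ≠ 0 := by
    intro hz
    have hcomp : p.comp (Polynomial.X - Polynomial.C 1) = p := sub_eq_zero.mp hz
    have heval : ∀ x : ℂ, p.eval (x - 1) = p.eval x := by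
      intro x
      conv_rhs => rw [← hcomp]
      simp [Polynomial.eval_comp]
    have hn : ∀ n : ℕ, p.eval (-(n:ℂ)) = p.eval 0 := by
      intro n
      induction n with
      | zero => simp
      | succ k ih =>
          have := heval (-(k:ℂ))
          push_cast
          rw [show -((k:ℂ)+1) = -(k:ℂ) - 1 by ring, this, ih]
    have hroots : {x : ℂ | (p - Polynomial.C (p.eval 0)).IsRoot x}.Infinite := by
      apply Set.infinite_of_injective_forall_mem
        (f := fun n : ℕ => -(n:ℂ))
      · intro a b hab
        simpa using hab
      · intro n
        simp only [Set.mem_setOf_eq, Polynomial.IsRoot, Polynomial.eval_sub,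
          Polynomial.eval_C, hn n, sub_self]
    have := Polynomial.eq_zero_of_infinite_isRoot _ hroots
    have hpc : p = Polynomial.C (p.eval 0) := by
      have := sub_eq_zero.mp this
      exact this
    rw [hpc] at hp
    simp at hp
  refine ⟨hne, ?_⟩
  have hdeg : (p.comp (Polynomial.X - Polynomial.C 1) - p).degree < p.degree := by
    have := Polynomial.degree_sub_lt
      (by rw [Polynomial.degree_eq_natDegree hpc0, Polynomial.degree_eq_natDegree hp0, hnd])
      hpc0 hlc
    calc (p.comp (Polynomial.X - Polynomial.C 1) - p).degree
        < (p.comp (Polynomial.X - Polynomial.C 1)).degree := this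
      _ = p.degree := by
          rw [Polynomial.degree_eq_natDegree hpc0, Polynomial.degree_eq_natDegree hp0, hnd]
  exact Polynomial.natDegree_lt_natDegree hne hdeg

lemma shA_aevalX0 (m : ℤ) (p : Polynomial ℂ) :
    shA m (Polynomial.aeval (X 0 : P2) p)
      = Polynomial.aeval (X 0 : P2) (p.comp (Polynomial.X - Polynomial.C (m:ℂ))) := by
  rw [← Polynomial.aeval_algHom_apply, shA_X0, Polynomial.aeval_comp]
  congr 1
  rw [map_sub, Polynomial.aeval_X, Polynomial.aeval_C, algebraMap_eq]

section Core

variable {lam al be ga : ℂ} {h : Polynomial ℂ} {W : Submodule ℂ P2}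
variable (hlam : lam ≠ 0) (hW : IsLSubmodule lam al be ga h W)

lemma hmPoly_zero : hmPoly al h 0 = 0 := by simp [hmPoly]
lemma hmPoly_one : hmPoly al h 1 = h := by simp [hmPoly]
lemma hmPoly_negone : hmPoly al h (-1) = -h - (2*al) • hq al h := by
  simp only [hmPoly, Int.cast_neg, Int.cast_one]
  module

lemma toT_zero : toT 0 = 0 := by simp [toT]

include hW in
lemma mulX0_mem {f : P2} (hf : f ∈ W) : X 0 * f ∈ W := by
  have := (hW 0 f hf).1
  rw [opL_apply] at this
  simpa [hmPoly_zero, toT_zero] using this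

include hW in
lemma mulX1_mem {f : P2} (hf : f ∈ W) : X 1 * f ∈ W := by
  have := (hW 0 f hf).2.1
  rw [opM_apply] at this
  simpa using this

include hW in
lemma mulP_mem (p : P2) {f : P2} (hf : f ∈ W) : p * f ∈ W := by
  induction p using MvPolynomial.induction_on with
  | C a => rw [C_mul']; exact W.smul_mem a hf
  | add p q hp hq => rw [add_mul]; exact W.add_mem hp hq
  | mul_X p i hp =>
      have : p * X i * f = X i * (p * f) := by ring
      rw [this]
      fin_cases i
      · exact mulX0_mem hW hp
      · exact mulX1_mem hW hp

include hlam hW in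
lemma shift_mem (hab : al ≠ 0 ∨ be ≠ 0) {f : P2} (hf : f ∈ W) (m : ℤ) :
    shA m f ∈ W := by
  rcases eq_or_ne be 0 with hbe | hbe
  · -- use the M-operators; here al ≠ 0
    have hal : al ≠ 0 := by tauto
    rcases eq_or_ne m 0 with rfl | hm
    · simpa using hf
    · have key : ∀ (n k : ℤ) (g : P2), opM lam al n (opM lam al k g)
          = lam ^ (n + k) • (((X 1 - C ((n:ℂ) * al)) * (X 1 - C ((k:ℂ) * al))) * shA (n+k) g) := by
        intro n k g
        simp only [opM_apply, map_smul, map_mul, map_sub, shA_X1, shA_C, shA_shA,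
          smul_eq_C_mul, zpow_add₀ hlam, map_mul]
        ring
      have h2 : opM lam al (-1) (opM lam al (m+1) f) ∈ W :=
        (hW (-1) _ (hW (m+1) f hf).2.1).2.1
      have h3 : opM lam al 1 (opM lam al (m-1) f) ∈ W :=
        (hW 1 _ (hW (m-1) f hf).2.1).2.1
      have e2 := key (-1) (m+1) f
      have e3 := key 1 (m-1) f
      have hsum2 : (-1 : ℤ) + (m+1) = m := by ring
      have hsum3 : (1 : ℤ) + (m-1) = m := by ring
      rw [hsum2] at e2; rw [hsum3] at e3
      have hdiff : opM lam al (-1) (opM lam al (m+1) f) - opM lam al 1 (opM lam al (m-1) f)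
          = (lam ^ m * (-2 * (m:ℂ) * al ^ 2)) • shA m f := by
        rw [e2, e3]
        push_cast
        simp only [smul_eq_C_mul, map_mul, map_add, map_sub, map_neg, map_pow,
          map_one, map_ofNat]
        ring
      have hc : lam ^ m * (-2 * (m:ℂ) * al ^ 2) ≠ 0 := by
        apply mul_ne_zero (zpow_ne_zero _ hlam)
        apply mul_ne_zero (mul_ne_zero (by norm_num) ?_) (pow_ne_zero _ hal)
        exact_mod_cast Int.cast_ne_zero.mpr hm
      have := W.sub_mem h2 h3
      rw [hdiff] at this
      have := W.smul_mem (lam ^ m * (-2 * (m:ℂ) * al ^ 2))⁻¹ this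
      rwa [inv_smul_smul₀ hc] at this
  · -- use S-operators
    have := (hW m f hf).2.2.1
    rw [opS_apply] at this
    have h2 := W.smul_mem (lam ^ m * be)⁻¹ this
    rwa [inv_smul_smul₀ (mul_ne_zero (zpow_ne_zero _ hlam) hbe)] at h2

lemma toT_sub (p q : Polynomial ℂ) : toT (p - q) = toT p - toT q :=
  map_sub (Polynomial.aeval (X 1 : P2)) p q

lemma toT_neg (p : Polynomial ℂ) : toT (-p) = -toT p :=
  map_neg (Polynomial.aeval (X 1 : P2)) p

lemma toT_smul (c : ℂ) (p : Polynomial ℂ) : toT (c • p) = c • toT p :=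
  map_smul (Polynomial.aeval (X 1 : P2)) c p

include hlam hW in
lemma eOp_mem (hab : al ≠ 0 ∨ be ≠ 0) {f : P2} (hf : f ∈ W) :
    pderiv 1 f - toT (hq al h) * f ∈ W := by
  rcases eq_or_ne be 0 with hbe | hbe
  · -- use L-operators; here al ≠ 0
    have hal : al ≠ 0 := by tauto
    have hu1 : shA (-1) (opL lam al h 1 f)
        = lam • ((X 0 + C 1 + toT h) * f - (X 1 - C al) * pderiv 1 f) := by
      simp only [opL_apply, hmPoly_one, map_sub, map_smul, map_mul, map_add,
        shA_X0, shA_X1, shA_C, shA_toT, shA_dT, shA_shA, neg_add_cancel, shA_zero,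
        zpow_one, Int.cast_one]
      push_cast
      simp only [smul_eq_C_mul, map_mul, map_neg, map_one, map_ofNat]
      ring
    have hu2 : shA 1 (opL lam al h (-1) f)
        = lam⁻¹ • ((X 0 - C 1 + toT (hmPoly al h (-1))) * f + (X 1 + C al) * pderiv 1 f) := by
      simp only [opL_apply, map_sub, map_smul, map_mul, map_add,
        shA_X0, shA_X1, shA_C, shA_toT, shA_dT, shA_shA, add_neg_cancel, shA_zero,
        zpow_neg_one, Int.cast_neg, Int.cast_one]
      push_cast
      simp only [smul_eq_C_mul, map_mul, map_neg, map_one, map_ofNat]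
      ring
    have m1 : shA (-1) (opL lam al h 1 f) ∈ W :=
      shift_mem hlam hW hab (hW 1 f hf).1 (-1)
    have m2 : shA 1 (opL lam al h (-1) f) ∈ W :=
      shift_mem hlam hW hab (hW (-1) f hf).1 1
    have mw : lam⁻¹ • shA (-1) (opL lam al h 1 f) + lam • shA 1 (opL lam al h (-1) f)
        - (2:ℂ) • (X 0 * f) ∈ W :=
      W.sub_mem (W.add_mem (W.smul_mem _ m1) (W.smul_mem _ m2))
        (W.smul_mem _ (mulX0_mem hW hf))
    have hcomb : lam⁻¹ • shA (-1) (opL lam al h 1 f) + lam • shA 1 (opL lam al h (-1) f)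
        - (2:ℂ) • (X 0 * f) = (2*al) • (pderiv 1 f - toT (hq al h) * f) := by
      rw [hu1, hu2, smul_smul, smul_smul, inv_mul_cancel₀ hlam, mul_inv_cancel₀ hlam,
        one_smul, one_smul, hmPoly_negone, toT_sub, toT_neg, toT_smul]
      simp only [smul_eq_C_mul, map_mul, map_ofNat]
      ring
    rw [hcomb] at mw
    have := W.smul_mem (2*al)⁻¹ mw
    rwa [inv_smul_smul₀ (mul_ne_zero (by norm_num) hal)] at this
  · -- use I-operators
    have hu : shA (-1) (opI lam al be ga h 1 f)
        = (lam * ga) • f + (lam * be) • (pderiv 1 f - toT (hq al h) * f) := by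
      simp only [opI_apply, map_add, map_smul, map_mul, map_sub,
        shA_C, shA_toT, shA_dT, shA_shA, neg_add_cancel, shA_zero,
        zpow_one, Int.cast_one]
      push_cast
      simp only [smul_eq_C_mul, map_mul, map_neg, map_one, map_ofNat]
      ring
    have m1 : shA (-1) (opI lam al be ga h 1 f) ∈ W :=
      shift_mem hlam hW hab (hW 1 f hf).2.2.2 (-1)
    have mw : shA (-1) (opI lam al be ga h 1 f) - (lam * ga) • f ∈ W :=
      W.sub_mem m1 (W.smul_mem _ hf)
    rw [hu] at mw
    have h2 : (lam * be) • (pderiv 1 f - toT (hq al h) * f) ∈ W := by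
      have : (lam * ga) • f + (lam * be) • (pderiv 1 f - toT (hq al h) * f)
          - (lam * ga) • f = (lam * be) • (pderiv 1 f - toT (hq al h) * f) := by ring_nf
      rwa [this] at mw
    have := W.smul_mem (lam * be)⁻¹ h2
    rwa [inv_smul_smul₀ (mul_ne_zero hlam hbe)] at this

include hlam hW in
lemma dT_mem (hab : al ≠ 0 ∨ be ≠ 0) {f : P2} (hf : f ∈ W) : pderiv 1 f ∈ W := by
  have h1 := eOp_mem hlam hW hab hf
  have h2 := mulP_mem hW (toT (hq al h)) hf
  have := W.add_mem h1 h2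
  rwa [sub_add_cancel] at this

include hlam hW in
lemma one_mem (hab : al ≠ 0 ∨ be ≠ 0) {f : P2} (hf : f ∈ W) (hf0 : f ≠ 0) :
    (1 : P2) ∈ W := by
  have S : ∀ n : ℕ, ∀ p : Polynomial ℂ, p.natDegree = n → p ≠ 0 →
      Polynomial.aeval (X 0 : P2) p ∈ W → (1 : P2) ∈ W := by
    intro n
    induction n using Nat.strong_induction_on with
    | _ n IH =>
      intro p hdeg hp0 hmem
      rcases eq_or_ne n 0 with rfl | hn
      · obtain ⟨c, rfl⟩ := Polynomial.natDegree_eq_zero.mp hdeg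
        have hc : c ≠ 0 := fun hz => hp0 (by rw [hz]; simp)
        have hmem2 : (C c : P2) ∈ W := by
          rwa [Polynomial.aeval_C, algebraMap_eq] at hmem
        have := W.smul_mem c⁻¹ hmem2
        rwa [smul_eq_C_mul, ← map_mul, inv_mul_cancel₀ hc, map_one] at this
      · have hnd : p.natDegree ≠ 0 := by rw [hdeg]; exact hn
        obtain ⟨hne, hlt⟩ := comp_sub_lt p hnd
        have hmem2 : Polynomial.aeval (X 0 : P2)
            (p.comp (Polynomial.X - Polynomial.C 1) - p) ∈ W := by
          rw [map_sub]
          have e1 : ((1:ℤ):ℂ) = 1 := by norm_num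
          have := shA_aevalX0 1 p
          rw [e1] at this
          rw [← this]
          exact W.sub_mem (shift_mem hlam hW hab hmem 1) hmem
        exact IH _ (hdeg ▸ hlt) _ rfl hne hmem2
  have T : ∀ d : ℕ, ∀ g : P2, g ∈ W → g ≠ 0 → degreeOf 1 g = d → (1:P2) ∈ W := by
    intro d
    induction d using Nat.strong_induction_on with
    | _ d IH =>
      intro g hg hg0 hdeg
      rcases eq_or_ne d 0 with rfl | hd
      · obtain ⟨p, rfl⟩ := exists_poly_of_degreeOf1_eq_zero g hdeg
        have hp0 : p ≠ 0 := fun hz => hg0 (by rw [hz]; simp)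
        exact S _ p rfl hp0 hg
      · have hnd : degreeOf 1 g ≠ 0 := by rw [hdeg]; exact hd
        obtain ⟨h1, h2⟩ := pderiv_lt g hnd
        exact IH _ (hdeg ▸ h2) _ (dT_mem hlam hW hab hg) h1 rfl
  exact T _ f hf hf0 rfl

end Core

/-- For `λ ∈ ℂ*`, `α, β, γ ∈ ℂ` and `h(t) ∈ ℂ[t]`, the `𝔏`-module
`Φ(λ,α,β,γ,h(t))` is irreducible (has no `𝔏`-submodules other than `0` and itself) if and
only if `α ≠ 0` or `β ≠ 0`. -/
theorem stmt4 (lam : ℂ) (hlam : lam ≠ 0) (al be ga : ℂ) (h : Polynomial ℂ) :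
    (∀ W : Submodule ℂ P2, IsLSubmodule lam al be ga h W → W = ⊥ ∨ W = ⊤) ↔
      (al ≠ 0 ∨ be ≠ 0) := by
  constructor
  · intro hirr
    by_contra hcon
    push_neg at hcon
    obtain ⟨rfl, rfl⟩ := hcon
    set W : Submodule ℂ P2 := (Ideal.span {(X 1 : P2)}).restrictScalars ℂ with hWdef
    have hmemW : ∀ f : P2, f ∈ W ↔ (X 1 : P2) ∣ f := by
      intro f
      rw [hWdef, Submodule.restrictScalars_mem, Ideal.mem_span_singleton]
    have hsub : IsLSubmodule lam 0 0 ga h W := by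
      intro m f hf
      obtain ⟨g, rfl⟩ := (hmemW f).mp hf
      have hshift : shA m (X 1 * g) = X 1 * shA m g := by
        rw [map_mul, shA_X1]
      refine ⟨?_, ?_, ?_, ?_⟩
      · rw [hmemW, opL_apply, hshift]
        apply dvd_sub
        · rw [smul_eq_C_mul]
          exact ((dvd_mul_right (X 1) (shA m g)).mul_left _).mul_left _
        · rw [smul_eq_C_mul]
          have : (X 1 - C ((m:ℂ) * 0) : P2) = X 1 := by simp
          rw [this]
          exact (dvd_mul_right (X 1) _).mul_left _
      · rw [hmemW, opM_apply, hshift, smul_eq_C_mul]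
        have : (X 1 - C ((m:ℂ) * 0) : P2) = X 1 := by simp
        rw [this]
        exact (dvd_mul_right (X 1) _).mul_left _
      · rw [hmemW, opS_apply, mul_zero, zero_smul]
        exact dvd_zero _
      · rw [hmemW, opI_apply, hshift]
        have h0 : ((m:ℂ) * lam ^ m * 0) = 0 := by ring
        rw [h0, zero_smul, add_zero, smul_eq_C_mul]
        exact ((dvd_mul_right (X 1) (shA m g)).mul_left _).mul_left _
    rcases hirr W hsub with hbot | htop
    · have hX : (X 1 : P2) ∈ W := (hmemW _).mpr dvd_rfl
      rw [hbot] at hX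
      exact X_ne_zero 1 ((Submodule.mem_bot ℂ).mp hX)
    · have h1 : (1 : P2) ∈ W := htop ▸ Submodule.mem_top
      obtain ⟨g, hg⟩ := (hmemW _).mp h1
      have := congrArg (eval (fun _ => (0:ℂ))) hg
      simp at this
  · intro hab W hW
    rcases eq_or_ne W ⊥ with hb | hWbot
    · exact Or.inl hb
    right
    obtain ⟨f, hf, hf0⟩ := Submodule.ne_bot_iff W |>.mp hWbot
    have h1 := one_mem hlam hW hab hf hf0
    rw [Submodule.eq_top_iff']
    intro p
    have := mulP_mem hW p h1
    rwa [mul_one] at this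

end
end

section
/- Let M be an 𝔏-module that is free of rank one as a module over U(ℂL_0 ⊕ ℂM_0), with basis element v, and for m ∈ ℤ let a_m(L_0,M_0), b_m(L_0,M_0) ∈ U(ℂL_0 ⊕ ℂM_0) ≅ ℂ[L_0,M_0] be the unique elements with S_m·v = a_m(L_0,M_0)·v and I_m·v = b_m(L_0,M_0)·v. Then for every polynomial f(x,y) ∈ ℂ[x,y] and every m ∈ ℤ, I_m·(f(L_0,M_0)·v) = f(L_0−m, M_0) b_m(L_0,M_0)·v + m (∂f/∂y)(L_0−m, M_0) a_m(L_0,M_0)·v. -/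
noncomputable section

/-- A module over the BMS-Kac-Moody algebra `𝔏`, given by the actions of the basis
elements `L_m, M_m, S_m, I_m` subject to the defining commutation relations of `𝔏`. -/
structure LAction (V : Type) [AddCommGroup V] [Module ℂ V] where
  L : ℤ → Module.End ℂ V
  M : ℤ → Module.End ℂ V
  S : ℤ → Module.End ℂ V
  I : ℤ → Module.End ℂ V
  hLL : ∀ m n : ℤ, ⁅L m, L n⁆ = ((n : ℂ) - (m : ℂ)) • L (m + n)
  hLM : ∀ m n : ℤ, ⁅L m, M n⁆ = ((n : ℂ) - (m : ℂ)) • M (m + n)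
  hLS : ∀ m n : ℤ, ⁅L m, S n⁆ = (n : ℂ) • S (m + n)
  hLI : ∀ m n : ℤ, ⁅L m, I n⁆ = (n : ℂ) • I (m + n)
  hMI : ∀ m n : ℤ, ⁅M m, I n⁆ = -((n : ℂ) • S (m + n))
  hMM : ∀ m n : ℤ, ⁅M m, M n⁆ = 0
  hMS : ∀ m n : ℤ, ⁅M m, S n⁆ = 0
  hSS : ∀ m n : ℤ, ⁅S m, S n⁆ = 0
  hSI : ∀ m n : ℤ, ⁅S m, I n⁆ = 0
  hII : ∀ m n : ℤ, ⁅I m, I n⁆ = 0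

/-- `ℂ[x,y] ≅ U(ℂL₀ ⊕ ℂM₀)`, realized as `(ℂ[x])[y]`. -/
abbrev PP : Type := Polynomial (Polynomial ℂ)

/-- Evaluation `f(x,y) ↦ f(A,B)` of a two-variable polynomial at a pair of commuting
endomorphisms (`x ↦ A`, `y ↦ B`, with `A`-powers written to the left). -/
def ev2 {V : Type} [AddCommGroup V] [Module ℂ V] (A B : Module.End ℂ V) (f : PP) :
    Module.End ℂ V :=
  Polynomial.eval₂ (Polynomial.aeval A).toRingHom B f

/-- The substitution `f(x,y) ↦ f(x-m,y)` on `ℂ[x,y] = (ℂ[x])[y]`. -/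
def shiftX (m : ℤ) (f : PP) : PP :=
  f.map (Polynomial.aeval (Polynomial.X - Polynomial.C (m : ℂ)) :
    Polynomial ℂ →ₐ[ℂ] Polynomial ℂ).toRingHom


variable {V : Type} [AddCommGroup V] [Module ℂ V]

lemma semiconj_aeval (X A A' : Module.End ℂ V) (h : X * A = A' * X) (p : Polynomial ℂ) :
    X * Polynomial.aeval A p = Polynomial.aeval A' p * X := by
  induction p using Polynomial.induction_on' with
  | add p q hp hq => simp [map_add, mul_add, add_mul, hp, hq]
  | monomial n c =>
      have hpow : X * A ^ n = A' ^ n * X := SemiconjBy.pow_right h n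
      simp [Polynomial.aeval_monomial, Algebra.algebraMap_eq_smul_one, smul_mul_assoc,
        mul_smul_comm, hpow]

lemma ev2_mul (A B : Module.End ℂ V) (hAB : A * B = B * A) (f g : PP) :
    ev2 A B (f * g) = ev2 A B f * ev2 A B g := by
  unfold ev2
  exact Polynomial.eval₂_mul_noncomm _ _
    (fun k => (semiconj_aeval B A A (by rw [hAB]) _).symm)

lemma ev2_add (A B : Module.End ℂ V) (f g : PP) :
    ev2 A B (f + g) = ev2 A B f + ev2 A B g :=
  Polynomial.eval₂_add _ _

lemma shiftX_add (m : ℤ) (f g : PP) : shiftX m (f + g) = shiftX m f + shiftX m g :=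
  Polynomial.map_add _

lemma ev2_monomial (A B : Module.End ℂ V) (n : ℕ) (p : Polynomial ℂ) :
    ev2 A B (Polynomial.monomial n p) = Polynomial.aeval A p * B ^ n := by
  simp [ev2, Polynomial.eval₂_monomial]

lemma shiftX_monomial (m : ℤ) (n : ℕ) (p : Polynomial ℂ) :
    shiftX m (Polynomial.monomial n p) =
      Polynomial.monomial n (Polynomial.aeval (Polynomial.X - Polynomial.C (m : ℂ)) p) := by
  simp [shiftX, Polynomial.map_monomial]

lemma aeval_shift (A : Module.End ℂ V) (m : ℤ) (p : Polynomial ℂ) :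
    Polynomial.aeval A (Polynomial.aeval (Polynomial.X - Polynomial.C (m : ℂ)) p)
      = Polynomial.aeval (A - (m : ℂ) • 1) p := by
  rw [← Polynomial.aeval_algHom_apply]
  congr 1
  rw [map_sub, Polynomial.aeval_X, Polynomial.aeval_C, Algebra.algebraMap_eq_smul_one]

lemma key_pow (M0 Im Sm : Module.End ℂ V) (m : ℂ)
    (h3 : Im * M0 = M0 * Im + m • Sm) (h4 : Sm * M0 = M0 * Sm) :
    ∀ n : ℕ, Im * M0 ^ (n + 1)
      = M0 ^ (n + 1) * Im + (m * (n + 1)) • (M0 ^ n * Sm) := by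
  intro n
  induction n with
  | zero => simpa using h3
  | succ n ih =>
      have h : Im * M0 ^ (n + 2) = (Im * M0 ^ (n + 1)) * M0 := by
        rw [mul_assoc, ← pow_succ]
      rw [h, ih, add_mul, mul_assoc, h3, smul_mul_assoc, mul_assoc, h4]
      rw [mul_add, ← mul_assoc, ← pow_succ, ← mul_assoc, ← pow_succ, mul_smul_comm]
      rw [add_assoc, ← add_smul]
      congr 1
      push_cast
      ring

lemma key (L0 M0 Im Sm : Module.End ℂ V) (m : ℤ)
    (h1 : Im * L0 = (L0 - (m : ℂ) • 1) * Im)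
    (h3 : Im * M0 = M0 * Im + (m : ℂ) • Sm)
    (h4 : Sm * M0 = M0 * Sm) (f : PP) :
    Im * ev2 L0 M0 f
      = ev2 L0 M0 (shiftX m f) * Im
        + (m : ℂ) • (ev2 L0 M0 (shiftX m (Polynomial.derivative f)) * Sm) := by
  induction f using Polynomial.induction_on' with
  | add p q hp hq =>
      rw [ev2_add, mul_add, hp, hq, map_add, shiftX_add, shiftX_add, ev2_add, ev2_add]
      rw [add_mul, add_mul, smul_add]
      abel
  | monomial n p =>
      have hIL := semiconj_aeval Im L0 (L0 - (m : ℂ) • 1) h1 p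
      rw [ev2_monomial, shiftX_monomial, ← mul_assoc, hIL]
      cases n with
      | zero =>
          rw [Polynomial.derivative_monomial]
          simp only [Nat.cast_zero, mul_zero, Polynomial.monomial_zero_right]
          rw [show shiftX m (0 : PP) = 0 from Polynomial.map_zero _]
          rw [ev2_monomial, aeval_shift]
          simp [ev2]
      | succ k =>
          rw [mul_assoc, key_pow M0 Im Sm ((m : ℂ)) h3 h4 k]
          rw [Polynomial.derivative_monomial]
          simp only [Nat.succ_sub_one]
          rw [ev2_monomial, aeval_shift, shiftX_monomial, ev2_monomial]
          rw [map_mul, map_natCast, map_mul, aeval_shift, map_natCast]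
          have hc : (Polynomial.aeval (L0 - (m : ℂ) • 1) p) * (((k + 1 : ℕ)) : Module.End ℂ V)
              = (((k + 1 : ℕ) : ℂ)) • (Polynomial.aeval (L0 - (m : ℂ) • 1) p) := by
            rw [show (((k + 1 : ℕ)) : Module.End ℂ V) = (((k + 1 : ℕ) : ℂ)) • 1 by
              rw [← Algebra.algebraMap_eq_smul_one]; exact (map_natCast _ _).symm]
            rw [mul_smul_comm, mul_one]
          rw [hc, mul_add, ← mul_assoc, mul_smul_comm, smul_mul_assoc, smul_mul_assoc, smul_smul]
          push_cast
          rw [mul_assoc, mul_assoc]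

/-- Let `M` be an `𝔏`-module, free of rank one over
`U(ℂL₀ ⊕ ℂM₀) ≅ ℂ[x,y]` with basis `v`, and let `a_m, b_m ∈ ℂ[x,y]` be the unique elements
with `S_m·v = a_m(L₀,M₀)·v` and `I_m·v = b_m(L₀,M₀)·v`. Then for every `f(x,y) ∈ ℂ[x,y]`
and `m ∈ ℤ`,
`I_m·(f(L₀,M₀)·v) = f(L₀-m,M₀) b_m(L₀,M₀)·v + m (∂f/∂y)(L₀-m,M₀) a_m(L₀,M₀)·v`. -/
theorem stmt11 (V : Type) [AddCommGroup V] [Module ℂ V] (ρ : LAction V) (v : V)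
    (hfree : Function.Bijective fun f : PP => ev2 (ρ.L 0) (ρ.M 0) f v)
    (m : ℤ) (a b : PP)
    (ha : ev2 (ρ.L 0) (ρ.M 0) a v = ρ.S m v)
    (hb : ev2 (ρ.L 0) (ρ.M 0) b v = ρ.I m v) (f : PP) :
    ρ.I m (ev2 (ρ.L 0) (ρ.M 0) f v)
      = ev2 (ρ.L 0) (ρ.M 0) (shiftX m f * b) v
        + (m : ℂ) • ev2 (ρ.L 0) (ρ.M 0) (shiftX m (Polynomial.derivative f) * a) v := by
  have h5 : ρ.L 0 * ρ.M 0 = ρ.M 0 * ρ.L 0 := by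
    have h := ρ.hLM 0 0
    simp only [Ring.lie_def, Int.cast_zero, sub_zero, sub_self, zero_smul, sub_eq_zero] at h
    exact h
  have h1 : ρ.I m * ρ.L 0 = (ρ.L 0 - (m : ℂ) • 1) * ρ.I m := by
    have h := ρ.hLI 0 m
    simp only [Ring.lie_def, zero_add] at h
    rw [sub_mul, smul_mul_assoc, one_mul, ← h, sub_sub_cancel]
  have h3 : ρ.I m * ρ.M 0 = ρ.M 0 * ρ.I m + (m : ℂ) • ρ.S m := by
    have h := ρ.hMI 0 m
    simp only [Ring.lie_def, zero_add] at h
    rw [sub_eq_iff_eq_add] at h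
    rw [h]
    abel
  have h4 : ρ.S m * ρ.M 0 = ρ.M 0 * ρ.S m := by
    have h := ρ.hMS 0 m
    simp only [Ring.lie_def, sub_eq_zero] at h
    exact h.symm
  have hkey := key (ρ.L 0) (ρ.M 0) (ρ.I m) (ρ.S m) m h1 h3 h4 f
  have happ : ρ.I m (ev2 (ρ.L 0) (ρ.M 0) f v)
      = (ρ.I m * ev2 (ρ.L 0) (ρ.M 0) f) v := rfl
  rw [happ, hkey, ev2_mul _ _ h5, ev2_mul _ _ h5]
  simp only [LinearMap.add_apply, LinearMap.smul_apply, Module.End.mul_apply, ha, hb]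


end
end

section
/- Let λ ∈ ℂ*, α ∈ ℂ, h(t) ∈ ℂ[t], and let M be an 𝔏-module whose underlying space is ℂ[x,y], on which L_0 acts as multiplication by x, M_0 acts as multiplication by y, and more generally L_m·f(x,y) = λ^m (x + h_m(y)) f(x−m,y) − m λ^m (y − mα) ∂_y(f(x−m,y)) and M_m·f(x,y) = λ^m (y − mα) f(x−m,y) for all m ∈ ℤ. Then there exist constants β, γ ∈ ℂ such that S_0·1 = β and I_0·1 = γ (i.e., S_0 and I_0 send the constant polynomial 1 to constant polynomials). -/
noncomputable section

section Aux
open MvPolynomial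
open MvPolynomial in
lemma eval_aeval' (v : Fin 2 → ℂ) (f : Fin 2 → P2) (p : P2) :
    eval v (aeval f p) = eval (fun i => eval v (f i)) p := by
  induction p using MvPolynomial.induction_on with
  | C a => simp
  | add p q hp hq => simp only [map_add]; rw [hp, hq]
  | mul_X p i hp => simp only [map_mul, aeval_X, eval_mul, eval_X]; rw [hp]

open MvPolynomial in
lemma peval_aeval (a : ℂ) (F : Fin 2 → Polynomial ℂ) (p : P2) :
    Polynomial.eval a (aeval F p) = eval (fun i => Polynomial.eval a (F i)) p := by
  induction p using MvPolynomial.induction_on with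
  | C c => simp
  | add p q hp hq => simp only [map_add, Polynomial.eval_add]; rw [hp, hq]
  | mul_X p i hp => simp only [map_mul, aeval_X, eval_mul, eval_X, Polynomial.eval_mul]; rw [hp]

open MvPolynomial in
lemma deriv_aeval (a : ℂ) (p : P2) :
    Polynomial.derivative (aeval ![Polynomial.C a, Polynomial.X] p : Polynomial ℂ)
      = aeval ![Polynomial.C a, Polynomial.X] (pderiv 1 p) := by
  induction p using MvPolynomial.induction_on with
  | C c => simp
  | add p q hp hq => simp only [map_add, Polynomial.derivative_add]; rw [hp, hq]
  | mul_X p i hp =>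
      fin_cases i <;>
        simp [pderiv_mul, hp, mul_comm, mul_assoc, mul_left_comm, Pi.single_apply, add_comm]

lemma eval_const_of_shift (r : Polynomial ℂ) (hr : ∀ x : ℂ, r.eval (x - 1) = r.eval x) :
    ∀ a : ℂ, r.eval a = r.eval 0 := by
  have hroot : ∀ n : ℕ, (r - Polynomial.C (r.eval 0)).eval (-(n : ℂ)) = 0 := by
    intro n
    induction n with
    | zero => simp
    | succ k ih =>
        have := hr (-(k : ℂ))
        push_cast
        push_cast at ih
        simp only [Polynomial.eval_sub, Polynomial.eval_C] at ih ⊢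
        rw [show -((k:ℂ) + 1) = -(k:ℂ) - 1 by ring, this]
        exact ih
  have hz : r - Polynomial.C (r.eval 0) = 0 := by
    apply Polynomial.eq_zero_of_infinite_isRoot
    refine Set.infinite_of_injective_forall_mem (f := fun n : ℕ => -(n : ℂ))
      (fun m n hmn => ?_) (fun n => hroot n)
    exact_mod_cast neg_injective hmn
  intro a
  have h2 : r = Polynomial.C (r.eval 0) := by linear_combination (norm := ring_nf) hz
  rw [h2]; simp

open MvPolynomial in
lemma const_of (g : P2) (hsh : shiftS 1 g = g) (hd : dT g = 0) :
    ∃ c : ℂ, g = C c := by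
  have hsh' : aeval ![X 0 - C ((1:ℤ):ℂ), X 1] g = g := hsh
  have hd' : pderiv (1 : Fin 2) g = 0 := hd
  refine ⟨eval ![0, 0] g, funext fun v => ?_⟩
  have step_t : eval v g = eval ![v 0, 0] g := by
    set q : Polynomial ℂ := aeval ![Polynomial.C (v 0), Polynomial.X] g with hq
    have hdq : Polynomial.derivative q = 0 := by
      rw [hq, deriv_aeval, hd', map_zero]
    have hqc : q = Polynomial.C (q.coeff 0) :=
      Polynomial.eq_C_of_natDegree_eq_zero
        (Polynomial.natDegree_eq_zero_of_derivative_eq_zero hdq)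
    have hv1 : (fun i => Polynomial.eval (v 1) (![Polynomial.C (v 0), Polynomial.X] i)) = v := by
      funext i; fin_cases i <;> simp
    have hv2 : (fun i => Polynomial.eval 0 (![Polynomial.C (v 0), Polynomial.X] i))
        = ![v 0, 0] := by
      funext i; fin_cases i <;> simp
    have e1 : Polynomial.eval (v 1) q = eval v g := by rw [hq, peval_aeval, hv1]
    have e2 : Polynomial.eval 0 q = eval ![v 0, 0] g := by rw [hq, peval_aeval, hv2]
    rw [← e1, ← e2, hqc]; simp
  have step_s : ∀ b : ℂ, eval ![v 0, b] g = eval ![0, b] g := by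
    intro b
    set p1 : Polynomial ℂ := aeval ![Polynomial.X, Polynomial.C b] g with hp1
    have he : ∀ x : ℂ, p1.eval x = eval ![x, b] g := by
      intro x
      have hv : (fun i => Polynomial.eval x (![Polynomial.X, Polynomial.C b] i)) = ![x, b] := by
        funext i; fin_cases i <;> simp
      rw [hp1, peval_aeval, hv]
    have hshift : ∀ x : ℂ, p1.eval (x - 1) = p1.eval x := by
      intro x
      have hv : (fun i => eval ![x, b] ((![X 0 - C ((1:ℤ):ℂ), X 1] : Fin 2 → P2) i))
          = ![x - 1, b] := by
        funext i; fin_cases i <;> simp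
      rw [he, he]
      conv_rhs => rw [← hsh', eval_aeval', hv]
    have := eval_const_of_shift p1 hshift (v 0)
    rw [he, he] at this
    exact this
  have last : eval ![(0:ℂ), 0] g = eval ![0, 0] g := rfl
  rw [eval_C, step_t, step_s 0]


lemma shiftS_zero : shiftS 0 = 1 := by
  apply LinearMap.ext; intro p
  show (aeval ![X 0 - C ((0:ℤ):ℂ), X 1]) p = p
  have hv : (![X 0 - C ((0:ℤ):ℂ), X 1] : Fin 2 → P2) = X := by
    funext i; fin_cases i <;> simp
  rw [hv]
  simp [aeval_X_left]

lemma opL_zero (lam al : ℂ) (h : Polynomial ℂ) : opL lam al h 0 = mulOp (X 0) := by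
  have h0 : hmPoly al h 0 = 0 := by simp [hmPoly]
  simp [opL, h0, toT, shiftS_zero]

lemma opM_zero (lam al : ℂ) : opM lam al 0 = mulOp (X 1) := by
  simp [opM, shiftS_zero]

lemma T_mul (T : Module.End ℂ P2)
    (c0 : ∀ p : P2, T (X 0 * p) = X 0 * T p)
    (c1 : ∀ p : P2, T (X 1 * p) = X 1 * T p) :
    ∀ p : P2, T p = p * T 1 := by
  intro p
  induction p using MvPolynomial.induction_on with
  | C a =>
      have : (C a : P2) = a • 1 := by simp [MvPolynomial.smul_eq_C_mul]
      rw [this, map_smul, MvPolynomial.smul_eq_C_mul, smul_mul_assoc,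
        MvPolynomial.smul_eq_C_mul, one_mul]
  | add p q hp hq => rw [map_add, hp, hq, add_mul]
  | mul_X p i hp =>
      fin_cases i
      · show T (p * X 0) = p * X 0 * T 1
        rw [mul_comm p (X 0), c0, hp]; ring
      · show T (p * X 1) = p * X 1 * T 1
        rw [mul_comm p (X 1), c1, hp]; ring

lemma key_s12 (lam : ℂ) (hlam : lam ≠ 0) (al : ℂ) (h : Polynomial ℂ)
    (T : Module.End ℂ P2)
    (hc0 : opL lam al h 0 * T = T * opL lam al h 0)
    (hc0' : opM lam al 0 * T = T * opM lam al 0)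
    (hc1 : opL lam al h 1 * T = T * opL lam al h 1)
    (hc1' : opM lam al 1 * T = T * opM lam al 1) :
    ∃ c : ℂ, T 1 = C c := by
  -- T is multiplication-equivariant
  have c0 : ∀ p : P2, T (X 0 * p) = X 0 * T p := by
    intro p
    have := LinearMap.congr_fun hc0 p
    simp only [Module.End.mul_apply, opL_zero] at this
    simpa [mulOp, LinearMap.mulLeft_apply] using this.symm
  have c1 : ∀ p : P2, T (X 1 * p) = X 1 * T p := by
    intro p
    have := LinearMap.congr_fun hc0' p
    simp only [Module.End.mul_apply, opM_zero] at this
    simpa [mulOp, LinearMap.mulLeft_apply] using this.symm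
  have Tm := T_mul T c0 c1
  have hXne : (X 1 - C al : P2) ≠ 0 := by
    intro h0
    have := congrArg (eval ![0, al + 1]) h0
    simp at this
  have hM1 : ∀ p : P2, opM lam al 1 p = lam • ((X 1 - C al) * shiftS 1 p) := by
    intro p
    simp [opM, Module.End.mul_apply, mulOp, LinearMap.mulLeft_apply]
  have hshift1 : shiftS 1 (1 : P2) = 1 := map_one (aeval ![X 0 - C ((1:ℤ):ℂ), X 1] : P2 →ₐ[ℂ] P2)
  have hMcomm := LinearMap.congr_fun hc1' 1
  simp only [Module.End.mul_apply] at hMcomm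
  rw [hM1, hM1, hshift1, mul_one, map_smul, Tm (X 1 - C al)] at hMcomm
  have hsh : shiftS 1 (T 1) = T 1 := by
    have h2 : (X 1 - C al) * shiftS 1 (T 1) = (X 1 - C al) * T 1 :=
      smul_right_injective P2 hlam hMcomm
    exact mul_left_cancel₀ hXne h2
  have hL1 : ∀ p : P2, opL lam al h 1 p
      = lam • ((X 0 + toT (hmPoly al h 1)) * shiftS 1 p)
        - ((1:ℂ) * lam) • ((X 1 - C ((1:ℂ) * al)) * dT (shiftS 1 p)) := by
    intro p
    simp [opL, Module.End.mul_apply, mulOp, LinearMap.mulLeft_apply]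
  have hLcomm := LinearMap.congr_fun hc1 1
  simp only [Module.End.mul_apply] at hLcomm
  have hdT1 : dT (1 : P2) = 0 := by simp [dT]
  rw [hL1, hL1, hshift1, hdT1] at hLcomm
  simp only [mul_zero, smul_zero, sub_zero, map_smul] at hLcomm
  rw [hsh, mul_one, Tm (X 0 + toT (hmPoly al h 1))] at hLcomm
  have hdg : dT (T 1) = 0 := by
    have h3 : ((1:ℂ) * lam) • ((X 1 - C ((1:ℂ) * al)) * dT (T 1)) = 0 := by
      linear_combination (norm := module) -hLcomm
    rw [one_mul, one_mul] at h3
    rcases smul_eq_zero.mp h3 with h5 | h5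
    · exact absurd h5 hlam
    rcases mul_eq_zero.mp h5 with h6 | h6
    · exact absurd h6 hXne
    · exact h6
  exact const_of (T 1) hsh hdg

end Aux

/-- Let `λ ∈ ℂ*`, `α ∈ ℂ`, `h(t) ∈ ℂ[t]`, and let `M` be an `𝔏`-module
with underlying space `ℂ[x,y]` on which `L_m` and `M_m` act by the `Φ`-formulas (in
particular `L₀` is multiplication by `x` plus `0`, `M₀` is multiplication by `y`). Then
there are constants `β, γ ∈ ℂ` with `S₀·1 = β` and `I₀·1 = γ`. -/
theorem stmt12 (lam : ℂ) (hlam : lam ≠ 0) (al : ℂ) (h : Polynomial ℂ)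
    (ρ : LAction P2)
    (hL : ∀ m : ℤ, ρ.L m = opL lam al h m)
    (hM : ∀ m : ℤ, ρ.M m = opM lam al m) :
    ∃ be ga : ℂ, ρ.S 0 (1 : P2) = MvPolynomial.C be ∧ ρ.I 0 (1 : P2) = MvPolynomial.C ga := by
  have comm : ∀ A B : Module.End ℂ P2, ⁅A, B⁆ = 0 → A * B = B * A := by
    intro A B hab
    rw [Ring.lie_def] at hab
    exact sub_eq_zero.mp hab
  have hcS : ∀ m : ℤ, opL lam al h m * ρ.S 0 = ρ.S 0 * opL lam al h m := by
    intro m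
    rw [← hL m]
    exact comm _ _ (by rw [ρ.hLS m 0]; norm_num)
  have hcS' : ∀ m : ℤ, opM lam al m * ρ.S 0 = ρ.S 0 * opM lam al m := by
    intro m
    rw [← hM m]
    exact comm _ _ (ρ.hMS m 0)
  have hcI : ∀ m : ℤ, opL lam al h m * ρ.I 0 = ρ.I 0 * opL lam al h m := by
    intro m
    rw [← hL m]
    exact comm _ _ (by rw [ρ.hLI m 0]; norm_num)
  have hcI' : ∀ m : ℤ, opM lam al m * ρ.I 0 = ρ.I 0 * opM lam al m := by
    intro m
    rw [← hM m]
    exact comm _ _ (by rw [ρ.hMI m 0]; norm_num)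
  obtain ⟨be, hbe⟩ := key_s12 lam hlam al h (ρ.S 0) (hcS 0) (hcS' 0) (hcS 1) (hcS' 1)
  obtain ⟨ga, hga⟩ := key_s12 lam hlam al h (ρ.I 0) (hcI 0) (hcI' 0) (hcI 1) (hcI' 1)
  exact ⟨be, ga, hbe, hga⟩


end
end

section
/- Let λ ∈ ℂ*, α ∈ ℂ, h(t) ∈ ℂ[t], and let M be an 𝔏-module whose underlying space is ℂ[x,y], on which L_m·f(x,y) = λ^m (x + h_m(y)) f(x−m,y) − m λ^m (y − mα) ∂_y(f(x−m,y)) and M_m·f(x,y) = λ^m (y − mα) f(x−m,y) for all m ∈ ℤ. Let β, γ ∈ ℂ be the constants with S_0·1 = β and I_0·1 = γ. Then for every m ∈ ℤ, I_m·1 = λ^m (γ − m β q(y)), where q(t) = (h(t)−h(α))/(t−α) is the polynomial quotient of h(t)−h(α) by t−α. -/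
noncomputable section

open Polynomial in
lemma polyODE {R : Type*} [CommRing R] [IsDomain R] [CharZero R] (c : R) (g : R[X])
    (hg : g + (X + C c) * derivative g = 0) : g = 0 := by
  have key : ∀ n : ℕ, g.coeff n = -c * g.coeff (n + 1) := by
    intro n
    have h0 := congrArg (fun p => Polynomial.coeff p n) hg
    simp only [coeff_add, add_mul, coeff_zero] at h0
    rw [coeff_C_mul] at h0
    cases n with
    | zero =>
      rw [Polynomial.mul_coeff_zero, coeff_X_zero, zero_mul, coeff_derivative] at h0
      push_cast at h0
      linear_combination h0
    | succ m =>
      rw [coeff_X_mul, coeff_derivative, coeff_derivative] at h0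
      have h2 : ((m:R) + 2) * (g.coeff (m+1) + c * g.coeff (m+2)) = 0 := by
        push_cast at h0 ⊢
        ring_nf
        ring_nf at h0
        linear_combination h0
      have h3 : ((m:R) + 2) ≠ 0 := by
        have : ((m:R) + 2) = ((m + 2 : ℕ) : R) := by push_cast; ring
        rw [this]
        exact Nat.cast_ne_zero.mpr (by omega)
      have := mul_eq_zero.mp h2
      rcases this with h | h
      · exact absurd h h3
      · linear_combination h
  have iter : ∀ j n : ℕ, g.coeff n = (-c) ^ j * g.coeff (n + j) := by
    intro j
    induction j with
    | zero => simp
    | succ k ih =>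
      intro n
      rw [key n, ih (n+1), pow_succ]
      rw [show n + 1 + k = n + (k+1) by omega]
      ring
  ext n
  rw [iter (g.natDegree + 1) n, coeff_eq_zero_of_natDegree_lt (by omega)]
  simp



namespace Aux

open MvPolynomial

open MvPolynomial

lemma shiftS_C (m : ℤ) (a : ℂ) : shiftS m (C a) = C a := by
  simp [shiftS]

lemma shiftS_one (m : ℤ) : shiftS m (1 : P2) = 1 := by
  simpa using shiftS_C m 1

lemma shiftS_X0 (m : ℤ) : shiftS m (X 0 : P2) = X 0 - C (m : ℂ) := by
  simp [shiftS]

lemma shiftS_X1 (m : ℤ) : shiftS m (X 1 : P2) = X 1 := by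
  simp [shiftS]

lemma shiftS_mul (m : ℤ) (f g : P2) : shiftS m (f * g) = shiftS m f * shiftS m g := by
  simp [shiftS]

lemma shiftS_toT (m : ℤ) (p : Polynomial ℂ) : shiftS m (toT p) = toT p := by
  unfold toT
  rw [show shiftS m (Polynomial.aeval (X 1 : P2) p)
    = (MvPolynomial.aeval ![X 0 - C (m : ℂ), X 1] : P2 →ₐ[ℂ] P2) (Polynomial.aeval (X 1 : P2) p)
    from rfl]
  rw [← Polynomial.aeval_algHom_apply]
  congr 1
  simp

lemma shiftS_add_apply (m n : ℤ) (f : P2) : shiftS m (shiftS n f) = shiftS (m + n) f := by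
  have : (MvPolynomial.aeval ![X 0 - C (m : ℂ), X 1] : P2 →ₐ[ℂ] P2).comp
      (MvPolynomial.aeval ![X 0 - C (n : ℂ), X 1] : P2 →ₐ[ℂ] P2)
      = (MvPolynomial.aeval ![X 0 - C ((m + n : ℤ) : ℂ), X 1] : P2 →ₐ[ℂ] P2) := by
    apply MvPolynomial.algHom_ext
    intro i
    fin_cases i <;> simp <;> push_cast <;> ring
  calc shiftS m (shiftS n f)
      = ((MvPolynomial.aeval ![X 0 - C (m : ℂ), X 1] : P2 →ₐ[ℂ] P2).comp
      (MvPolynomial.aeval ![X 0 - C (n : ℂ), X 1] : P2 →ₐ[ℂ] P2)) f := rfl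
    _ = shiftS (m + n) f := by rw [this]; rfl

lemma shiftS_zero : shiftS 0 = (1 : Module.End ℂ P2) := by
  apply LinearMap.ext
  intro f
  show (MvPolynomial.aeval ![X 0 - C ((0:ℤ) : ℂ), X 1] : P2 →ₐ[ℂ] P2) f = f
  have : (![X 0 - C ((0:ℤ) : ℂ), X 1] : Fin 2 → P2) = X := by
    funext i; fin_cases i <;> simp
  rw [this, MvPolynomial.aeval_X_left]
  rfl

lemma dT_C (a : ℂ) : dT (C a) = 0 := by simp [dT]

lemma dT_one : dT (1 : P2) = 0 := by simpa using dT_C 1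

lemma dT_toT (p : Polynomial ℂ) : dT (toT p) = toT (Polynomial.derivative p) := by
  induction p using Polynomial.induction_on with
  | C a => simp [toT, dT]
  | add p q hp hq => simp only [toT, map_add] at *; simp [hp, hq, dT]
  | monomial n a ih =>
    have e1 : toT (Polynomial.C a * Polynomial.X ^ (n+1))
        = X 1 * toT (Polynomial.C a * Polynomial.X ^ n) := by
      simp [toT]; ring
    rw [e1]
    show (MvPolynomial.pderiv (1 : Fin 2)) (X 1 * toT (Polynomial.C a * Polynomial.X ^ n)) = _
    rw [MvPolynomial.pderiv_mul, MvPolynomial.pderiv_X_self]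
    rw [show (MvPolynomial.pderiv (1 : Fin 2)) (toT (Polynomial.C a * Polynomial.X ^ n))
      = dT (toT (Polynomial.C a * Polynomial.X ^ n)) from rfl, ih]
    rw [Polynomial.derivative_mul, Polynomial.derivative_C, Polynomial.derivative_X_pow,
      Polynomial.derivative_mul, Polynomial.derivative_C, Polynomial.derivative_X_pow]
    simp only [toT, map_add, map_mul, map_pow, map_natCast, map_ofNat, Polynomial.aeval_X,
      Polynomial.aeval_C, zero_mul, add_zero, zero_add, one_mul]
    cases n with
    | zero => simp
    | succ k =>
      rw [show (k + 1 - 1 : ℕ) = k from rfl]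
      push_cast
      ring

lemma toT_C (a : ℂ) : toT (Polynomial.C a) = C a := by simp [toT]

lemma toT_zero : toT 0 = 0 := by simp [toT]

lemma toT_add (p q : Polynomial ℂ) : toT (p + q) = toT p + toT q := by simp [toT]

lemma toT_smul (a : ℂ) (p : Polynomial ℂ) : toT (a • p) = C a * toT p := by
  simp [toT, smul_eq_C_mul]

lemma toT_sub (p q : Polynomial ℂ) : toT (p - q) = toT p - toT q := by simp [toT]

def psi : P2 ≃ₐ[ℂ] Polynomial (MvPolynomial (Fin 1) ℂ) :=
  (MvPolynomial.renameEquiv ℂ (Equiv.swap (0:Fin 2) 1)).trans (MvPolynomial.finSuccEquiv ℂ 1)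

lemma psi_X1 : psi (X 1 : P2) = Polynomial.X := by
  simp [psi, MvPolynomial.finSuccEquiv_X_zero]

lemma psi_X0 : psi (X 0 : P2) = Polynomial.C (X 0) := by
  have : ((1 : Fin 2)) = Fin.succ 0 := rfl
  simp only [psi, AlgEquiv.trans_apply, MvPolynomial.renameEquiv_apply, MvPolynomial.rename_X,
    Equiv.swap_apply_left, this, MvPolynomial.finSuccEquiv_X_succ]

lemma psi_C (a : ℂ) : psi (C a : P2) = Polynomial.C (C a) := by
  simp [psi, MvPolynomial.finSuccEquiv_apply]

lemma psi_dT (f : P2) : psi (dT f) = Polynomial.derivative (psi f) := by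
  induction f using MvPolynomial.induction_on with
  | C a => simp [dT_C, psi_C]
  | add p q hp hq =>
    rw [show dT (p + q) = dT p + dT q from map_add _ _ _, map_add, map_add, hp, hq,
      Polynomial.derivative_add]
  | mul_X p i hp =>
    have hdT : dT (p * X i) = dT p * X i + p * dT (X i) := by
      show (MvPolynomial.pderiv (1 : Fin 2)) (p * X i) = _
      rw [MvPolynomial.pderiv_mul]; rfl
    rw [hdT, map_add, map_mul, map_mul, map_mul, hp, Polynomial.derivative_mul]
    fin_cases i <;> simp only [Fin.isValue, Fin.zero_eta, Fin.mk_one]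
    · rw [show dT (X (0 : Fin 2) : P2) = 0 by simp [dT, MvPolynomial.pderiv_X_of_ne]]
      simp [psi_X0]
    · rw [show dT (X (1 : Fin 2) : P2) = 1 by simp [dT]]
      simp [psi_X1]

lemma injODE (c : ℂ) (e : P2) (he : e + (X 1 + C c) * dT e = 0) : e = 0 := by
  have h1 := congrArg psi he
  rw [map_add, map_mul, map_add, psi_X1, psi_C, psi_dT, map_zero] at h1
  have h2 := polyODE (MvPolynomial.C c) (psi e) h1
  have := congrArg psi.symm h2
  rwa [AlgEquiv.symm_apply_apply, map_zero] at this


lemma key_q (al : ℂ) (h : Polynomial ℂ) :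
    (Polynomial.X - Polynomial.C al) * hq al h = h - Polynomial.C (Polynomial.eval al h) := by
  apply (Polynomial.mul_divByMonic_eq_iff_isRoot).mpr
  simp [Polynomial.IsRoot]

lemma key_q' (al : ℂ) (h : Polynomial ℂ) :
    hq al h + (Polynomial.X - Polynomial.C al) * Polynomial.derivative (hq al h)
      = Polynomial.derivative h := by
  have h2 := congrArg Polynomial.derivative (key_q al h)
  simp only [Polynomial.derivative_mul, Polynomial.derivative_sub, Polynomial.derivative_X,
    Polynomial.derivative_C, sub_zero, one_mul] at h2
  linear_combination h2

lemma toTkey (al : ℂ) (h : Polynomial ℂ) :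
    toT (hq al h) + (X 1 - C al) * toT (Polynomial.derivative (hq al h))
      = toT (Polynomial.derivative h) := by
  have h2 := congrArg (fun p => toT p) (key_q' al h)
  simpa [toT, map_add, map_mul, map_sub] using h2

lemma dT_C_mul (a : ℂ) (f : P2) : dT (C a * f) = C a * dT f :=
  MvPolynomial.pderiv_C_mul

lemma brk (A B : Module.End ℂ P2) (f : P2) : ⁅A, B⁆ f = A (B f) - B (A f) := by
  rw [Ring.lie_def]; rfl

lemma mulOp_apply (p f : P2) : mulOp p f = p * f := rfl

section Main

variable (lam al : ℂ) (h : Polynomial ℂ) (ρ : LAction P2)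

lemma L_one (hL : ∀ m : ℤ, ρ.L m = opL lam al h m) (m : ℤ) :
    ρ.L m (1 : P2) = lam ^ m • (X 0 + toT (hmPoly al h m)) := by
  rw [hL m]
  simp only [opL, LinearMap.sub_apply, LinearMap.smul_apply, Module.End.mul_apply]
  rw [shiftS_one, dT_one, map_zero, smul_zero, sub_zero, mulOp_apply, mul_one]

lemma M_one (hM : ∀ m : ℤ, ρ.M m = opM lam al m) (m : ℤ) :
    ρ.M m (1 : P2) = lam ^ m • (X 1 - C ((m:ℂ) * al)) := by
  rw [hM m]
  simp only [opM, LinearMap.smul_apply, Module.End.mul_apply]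
  rw [shiftS_one, mulOp_apply, mul_one]

lemma L_apply (hL : ∀ m : ℤ, ρ.L m = opL lam al h m) (m : ℤ) (f : P2) :
    ρ.L m f = lam ^ m • ((X 0 + toT (hmPoly al h m)) * shiftS m f)
      - ((m:ℂ) * lam ^ m) • ((X 1 - C ((m:ℂ) * al)) * dT (shiftS m f)) := by
  rw [hL m]; rfl

lemma M_apply (hM : ∀ m : ℤ, ρ.M m = opM lam al m) (m : ℤ) (f : P2) :
    ρ.M m f = lam ^ m • ((X 1 - C ((m:ℂ) * al)) * shiftS m f) := by
  rw [hM m]; rfl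

lemma L0_eq (hL : ∀ m : ℤ, ρ.L m = opL lam al h m) : ρ.L 0 = mulOp (X 0) := by
  rw [hL 0]
  unfold opL
  have h1 : hmPoly al h 0 = 0 := by simp [hmPoly]
  rw [h1, shiftS_zero, toT_zero]
  show (lam ^ (0:ℤ)) • (mulOp (X 0 + 0) * 1) - (((0:ℤ):ℂ) * lam ^ (0:ℤ)) • _ = _
  simp

lemma M0_eq (hM : ∀ m : ℤ, ρ.M m = opM lam al m) : ρ.M 0 = mulOp (X 1) := by
  rw [hM 0]
  unfold opM
  rw [shiftS_zero]
  show (lam ^ (0:ℤ)) • (mulOp (X 1 - C (((0:ℤ):ℂ) * al)) * 1) = _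
  simp

variable (hL : ∀ m : ℤ, ρ.L m = opL lam al h m) (hM : ∀ m : ℤ, ρ.M m = opM lam al m)
include hL hM

lemma S_mulX1 (k : ℤ) (f : P2) : ρ.S k (X 1 * f) = X 1 * ρ.S k f := by
  have e := congrArg (fun T : Module.End ℂ P2 => T f) (ρ.hMS 0 k)
  simp only [brk, M0_eq lam al ρ hM, mulOp_apply] at e
  change X 1 * ρ.S k f - ρ.S k (X 1 * f) = (0 : Module.End ℂ P2) f at e
  rw [LinearMap.zero_apply, sub_eq_zero] at e
  exact e.symm

lemma S_mulX0 (k : ℤ) (f : P2) :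
    ρ.S k (X 0 * f) = X 0 * ρ.S k f - (k:ℂ) • ρ.S k f := by
  have e := congrArg (fun T : Module.End ℂ P2 => T f) (ρ.hLS 0 k)
  simp only [brk, L0_eq lam al h ρ hL, mulOp_apply, zero_add] at e
  change X 0 * ρ.S k f - ρ.S k (X 0 * f) = ((k:ℂ) • ρ.S k) f at e
  rw [LinearMap.smul_apply] at e
  linear_combination -e

lemma I_mulX1 (k : ℤ) (f : P2) :
    ρ.I k (X 1 * f) = X 1 * ρ.I k f + (k:ℂ) • ρ.S k f := by
  have e := congrArg (fun T : Module.End ℂ P2 => T f) (ρ.hMI 0 k)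
  simp only [brk, M0_eq lam al ρ hM, mulOp_apply, zero_add] at e
  change X 1 * ρ.I k f - ρ.I k (X 1 * f) = (-((k:ℂ) • ρ.S k)) f at e
  rw [LinearMap.neg_apply, LinearMap.smul_apply] at e
  linear_combination -e

lemma I_mulX0 (k : ℤ) (f : P2) :
    ρ.I k (X 0 * f) = X 0 * ρ.I k f - (k:ℂ) • ρ.I k f := by
  have e := congrArg (fun T : Module.End ℂ P2 => T f) (ρ.hLI 0 k)
  simp only [brk, L0_eq lam al h ρ hL, mulOp_apply, zero_add] at e
  change X 0 * ρ.I k f - ρ.I k (X 0 * f) = ((k:ℂ) • ρ.I k) f at e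
  rw [LinearMap.smul_apply] at e
  linear_combination -e

lemma S_C_mul (k : ℤ) (a : ℂ) (f : P2) : ρ.S k (C a * f) = C a * ρ.S k f := by
  rw [← smul_eq_C_mul, ← smul_eq_C_mul, map_smul]

lemma I_C_mul (k : ℤ) (a : ℂ) (f : P2) : ρ.I k (C a * f) = C a * ρ.I k f := by
  rw [← smul_eq_C_mul, ← smul_eq_C_mul, map_smul]

lemma S_toT (k : ℤ) (p : Polynomial ℂ) : ρ.S k (toT p) = toT p * ρ.S k 1 := by
  induction p using Polynomial.induction_on with
  | C a =>
    rw [toT_C, show (C a : P2) = C a * 1 by rw [mul_one], S_C_mul lam al h ρ hL hM, mul_one]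
  | add p q hp hq => rw [toT_add, map_add, hp, hq]; ring
  | monomial n a ih =>
    have e1 : toT (Polynomial.C a * Polynomial.X ^ (n+1))
        = X 1 * toT (Polynomial.C a * Polynomial.X ^ n) := by
      simp [toT]; ring
    rw [e1, S_mulX1 lam al h ρ hL hM, ih]; ring

lemma I_toT (k : ℤ) (p : Polynomial ℂ) :
    ρ.I k (toT p) = toT p * ρ.I k 1
      + (k:ℂ) • (toT (Polynomial.derivative p) * ρ.S k 1) := by
  induction p using Polynomial.induction_on with
  | C a =>
    rw [toT_C, show (C a : P2) = C a * 1 by rw [mul_one], I_C_mul lam al h ρ hL hM]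
    simp [toT]
  | add p q hp hq =>
    rw [toT_add, map_add, hp, hq, Polynomial.derivative_add, toT_add]
    simp only [smul_eq_C_mul]
    ring
  | monomial n a ih =>
    have e1 : toT (Polynomial.C a * Polynomial.X ^ (n+1))
        = X 1 * toT (Polynomial.C a * Polynomial.X ^ n) := by
      simp [toT]; ring
    rw [e1, I_mulX1 lam al h ρ hL hM, ih, S_toT lam al h ρ hL hM]
    have e2 : Polynomial.derivative (Polynomial.C a * Polynomial.X ^ (n+1))
        = Polynomial.C a * Polynomial.X ^ n
          + Polynomial.X * Polynomial.derivative (Polynomial.C a * Polynomial.X ^ n) := by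
      rw [show Polynomial.C a * Polynomial.X ^ (n+1)
        = Polynomial.X * (Polynomial.C a * Polynomial.X ^ n) by ring,
        Polynomial.derivative_mul, Polynomial.derivative_X]
      ring
    rw [e2, toT_add, show toT (Polynomial.X * Polynomial.derivative (Polynomial.C a * Polynomial.X ^ n)) = X 1 * toT (Polynomial.derivative (Polynomial.C a * Polynomial.X ^ n)) by simp [toT]]
    simp only [smul_eq_C_mul]
    ring

end Main

lemma X1_sub_C_ne (a : ℂ) : (X 1 : P2) - C a ≠ 0 := by
  intro hcon
  have h2 := congrArg (MvPolynomial.coeff (Finsupp.single 1 1)) hcon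
  simp [MvPolynomial.coeff_X, MvPolynomial.coeff_C, eq_comm, Finsupp.single_eq_zero] at h2

lemma shift_inv_all (f : P2) (h1 : shiftS 1 f = f) : ∀ n : ℤ, shiftS n f = f := by
  have hnat : ∀ j : ℕ, shiftS (j : ℤ) f = f := by
    intro j
    induction j with
    | zero => rw [show ((0:ℕ):ℤ) = 0 from rfl, shiftS_zero]; rfl
    | succ i ih =>
      rw [show ((i+1:ℕ):ℤ) = (i:ℤ) + 1 by push_cast; ring, ← shiftS_add_apply, h1, ih]
  intro n
  rcases le_or_gt 0 n with hn | hn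
  · obtain ⟨j, rfl⟩ := Int.eq_ofNat_of_zero_le hn
    exact hnat j
  · obtain ⟨j, rfl⟩ : ∃ j : ℕ, n = -(j:ℤ) := ⟨n.natAbs, by omega⟩
    calc shiftS (-(j:ℤ)) f = shiftS (-(j:ℤ)) (shiftS (j:ℤ) f) := by rw [hnat j]
      _ = shiftS 0 f := by rw [shiftS_add_apply]; norm_num
      _ = f := by rw [shiftS_zero]; rfl

section Main2

variable (lam al : ℂ) (h : Polynomial ℂ) (ρ : LAction P2) (hlam : lam ≠ 0)
variable (hL : ∀ m : ℤ, ρ.L m = opL lam al h m) (hM : ∀ m : ℤ, ρ.M m = opM lam al m)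
include hlam hL hM

lemma S_one_shift (k : ℤ) : ∀ n : ℤ, shiftS n (ρ.S k 1) = ρ.S k 1 := by
  apply shift_inv_all
  have e := congrArg (fun T : Module.End ℂ P2 => T 1) (ρ.hMS 1 k)
  simp only [brk] at e
  change ρ.M 1 (ρ.S k 1) - ρ.S k (ρ.M 1 1) = (0 : Module.End ℂ P2) 1 at e
  rw [LinearMap.zero_apply, sub_eq_zero, M_apply lam al ρ hM,
    M_one lam al ρ hM, map_smul,
    show ρ.S k ((X 1 - C (((1:ℤ):ℂ) * al))) = ρ.S k ((X 1) * 1 - C (((1:ℤ):ℂ) * al) * 1) by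
      rw [mul_one, mul_one],
    map_sub, S_mulX1 lam al h ρ hL hM, S_C_mul lam al h ρ hL hM] at e
  have e2 : (X 1 - C (((1:ℤ):ℂ) * al)) * shiftS 1 (ρ.S k 1)
      = (X 1 - C (((1:ℤ):ℂ) * al)) * ρ.S k 1 := by
    have hlam1 : lam ^ (1:ℤ) ≠ 0 := zpow_ne_zero _ hlam
    apply smul_right_injective P2 hlam1
    show lam ^ (1:ℤ) • _ = lam ^ (1:ℤ) • _
    rw [e]
    congr 1
    ring
  exact mul_left_cancel₀ (X1_sub_C_ne _) e2

omit hL hM in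
lemma hCC (k : ℤ) : (C (lam ^ k) : P2) * C (lam ^ (-k)) = 1 := by
  rw [← map_mul, ← zpow_add₀ hlam]
  simp

omit hlam hL hM in
lemma dT_sub_C (f : P2) (a : ℂ) : dT (f - C a) = dT f := by
  rw [map_sub, dT_C, sub_zero]

lemma S_one (be : ℂ) (hbe : ρ.S 0 1 = C be) (k : ℤ) : ρ.S k 1 = C (lam ^ k * be) := by
  rcases eq_or_ne k 0 with rfl | hk
  · rw [hbe]; norm_num
  have e := congrArg (fun T : Module.End ℂ P2 => T 1) (ρ.hLS (-k) k)
  simp only [brk] at e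
  change ρ.L (-k) (ρ.S k 1) - ρ.S k (ρ.L (-k) 1) = ((k:ℂ) • ρ.S (-k + k)) 1 at e
  rw [neg_add_cancel, LinearMap.smul_apply, hbe,
      L_apply lam al h ρ hL (-k) (ρ.S k 1), L_one lam al h ρ hL (-k),
      S_one_shift lam al h ρ hlam hL hM k (-k), map_smul,
      show (X 0 + toT (hmPoly al h (-k)) : P2)
        = X 0 * 1 + toT (hmPoly al h (-k)) * 1 by ring,
      map_add, S_mulX0 lam al h ρ hL hM k 1] at e
  simp only [mul_one] at e
  rw [S_toT lam al h ρ hL hM k] at e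
  have e' : (C (lam ^ (-k)) : P2)
        * (C (k:ℂ) * (ρ.S k 1 + (X 1 + C (k:ℂ) * C al) * dT (ρ.S k 1)))
      = C (k:ℂ) * C be := by
    simp only [smul_eq_C_mul, Int.cast_neg, neg_mul, map_neg, map_mul, mul_one] at e
    linear_combination e
  have e'' := congrArg (fun z : P2 => (C (lam ^ k) : P2) * z) e'
  simp only [← mul_assoc] at e''
  rw [hCC lam hlam k, one_mul] at e''
  have hkne : (C (k:ℂ) : P2) ≠ 0 := by
    rw [MvPolynomial.C_ne_zero]
    exact_mod_cast hk
  have e3 : ρ.S k 1 + (X 1 + C (k:ℂ) * C al) * dT (ρ.S k 1) = C (lam ^ k) * C be := by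
    apply mul_left_cancel₀ hkne
    rw [e'']
    ring
  have e4 : (ρ.S k 1 - C (lam ^ k * be))
      + (X 1 + C ((k:ℂ) * al)) * dT (ρ.S k 1 - C (lam ^ k * be)) = 0 := by
    rw [dT_sub_C, map_mul, map_mul]
    linear_combination e3
  have e5 := injODE ((k:ℂ) * al) _ e4
  rw [sub_eq_zero] at e5
  exact e5

lemma I_one_shift (be : ℂ) (hbe : ρ.S 0 1 = C be) (k : ℤ) :
    ∀ n : ℤ, shiftS n (ρ.I k 1) = ρ.I k 1 := by
  apply shift_inv_all
  have e := congrArg (fun T : Module.End ℂ P2 => T 1) (ρ.hMI 1 k)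
  simp only [brk] at e
  change ρ.M 1 (ρ.I k 1) - ρ.I k (ρ.M 1 1) = (-((k:ℂ) • ρ.S (1 + k))) 1 at e
  rw [LinearMap.neg_apply, LinearMap.smul_apply, S_one lam al h ρ hlam hL hM be hbe (1+k),
      M_apply lam al ρ hM 1 (ρ.I k 1), M_one lam al ρ hM 1, map_smul,
      show (X 1 - C (((1:ℤ):ℂ) * al) : P2) = X 1 * 1 - C (((1:ℤ):ℂ) * al) * 1 by ring,
      map_sub, I_mulX1 lam al h ρ hL hM k 1, I_C_mul lam al h ρ hL hM k,
      S_one lam al h ρ hlam hL hM be hbe k] at e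
  simp only [mul_one] at e
  have hz' : (C (lam ^ (1:ℤ)) : P2) * C (lam ^ k) = C (lam ^ ((1:ℤ) + k)) := by
    rw [← map_mul, ← zpow_add₀ hlam]
  have key : (X 1 - C (((1:ℤ):ℂ) * al)) * shiftS 1 (ρ.I k 1)
      = (X 1 - C (((1:ℤ):ℂ) * al)) * ρ.I k 1 := by
    have hl1 : lam ^ (1:ℤ) ≠ 0 := zpow_ne_zero _ hlam
    apply smul_right_injective P2 hl1
    show lam ^ (1:ℤ) • _ = lam ^ (1:ℤ) • _
    simp only [smul_eq_C_mul, map_mul] at e ⊢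
    linear_combination e + (C (k:ℂ) * C be) * hz'
  exact mul_left_cancel₀ (X1_sub_C_ne _) key

lemma I_one (be ga : ℂ) (hbe : ρ.S 0 1 = C be) (hga : ρ.I 0 1 = C ga) (k : ℤ) :
    ρ.I k 1 = C (lam ^ k * ga) - C ((k:ℂ) * lam ^ k * be) * toT (hq al h) := by
  rcases eq_or_ne k 0 with rfl | hk
  · rw [hga]; norm_num
  have e := congrArg (fun T : Module.End ℂ P2 => T 1) (ρ.hLI (-k) k)
  simp only [brk] at e
  change ρ.L (-k) (ρ.I k 1) - ρ.I k (ρ.L (-k) 1) = ((k:ℂ) • ρ.I (-k + k)) 1 at e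
  rw [neg_add_cancel, LinearMap.smul_apply, hga,
      L_apply lam al h ρ hL (-k) (ρ.I k 1), L_one lam al h ρ hL (-k),
      I_one_shift lam al h ρ hlam hL hM be hbe k (-k), map_smul,
      show (X 0 + toT (hmPoly al h (-k)) : P2)
        = X 0 * 1 + toT (hmPoly al h (-k)) * 1 by ring,
      map_add, I_mulX0 lam al h ρ hL hM k 1] at e
  simp only [mul_one] at e
  rw [I_toT lam al h ρ hL hM k, S_one lam al h ρ hlam hL hM be hbe k] at e
  have hH' : toT (Polynomial.derivative (hmPoly al h (-k)))
      = C (((-k:ℤ):ℂ)) * toT (Polynomial.derivative h)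
        - C (((-k:ℤ):ℂ) * (((-k:ℤ):ℂ) - 1) * al) * toT (Polynomial.derivative (hq al h)) := by
    unfold hmPoly
    rw [Polynomial.derivative_sub, Polynomial.derivative_smul, Polynomial.derivative_smul,
      toT_sub, toT_smul, toT_smul]
  rw [hH'] at e
  -- step 1 : extract the scaled ODE
  have e' : (C (lam ^ (-k)) : P2)
        * (C (k:ℂ) * (ρ.I k 1 + (X 1 + C (k:ℂ) * C al) * dT (ρ.I k 1)))
      = C (k:ℂ) * C ga
        + C (k:ℂ) * (C (lam ^ (-k)) * C (lam ^ k))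
          * (C be * (C (((-k:ℤ):ℂ)) * toT (Polynomial.derivative h)
            - C (((-k:ℤ):ℂ) * (((-k:ℤ):ℂ) - 1) * al) * toT (Polynomial.derivative (hq al h)))) := by
    simp only [smul_eq_C_mul, Int.cast_neg, neg_mul, map_neg, map_mul, map_sub, map_one] at e ⊢
    linear_combination e
  have e2 := congrArg (fun z : P2 => C (lam ^ k) * z) e'
  have hcc : (C (lam ^ k) : P2) * C (lam ^ (-k)) = 1 := hCC lam hlam k
  have hkne : (C (k:ℂ) : P2) ≠ 0 := by
    rw [MvPolynomial.C_ne_zero]; exact_mod_cast hk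
  have e3 : ρ.I k 1 + (X 1 + C (k:ℂ) * C al) * dT (ρ.I k 1)
      = C (lam ^ k) * C ga
        + C (lam ^ k) * (C be * (C (((-k:ℤ):ℂ)) * toT (Polynomial.derivative h)
          - C (((-k:ℤ):ℂ) * (((-k:ℤ):ℂ) - 1) * al) * toT (Polynomial.derivative (hq al h)))) := by
    apply mul_left_cancel₀ hkne
    simp only [Int.cast_neg, neg_mul, map_neg, map_mul, map_sub, map_one] at e2 ⊢
    linear_combination e2 - (C (k:ℂ) * (ρ.I k 1 + (X 1 + C (k:ℂ) * C al) * dT (ρ.I k 1))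
      - C (lam ^ k) * (C (k:ℂ) * (C be * (-(C (k:ℂ)) * toT (Polynomial.derivative h)
        - -(C (k:ℂ)) * (-(C (k:ℂ)) - 1) * C al * toT (Polynomial.derivative (hq al h)))))) * hcc
  -- step 2 : subtract the candidate solution
  have hdD : dT (ρ.I k 1 - (C (lam ^ k * ga) - C ((k:ℂ) * lam ^ k * be) * toT (hq al h)))
      = dT (ρ.I k 1) + C ((k:ℂ) * lam ^ k * be) * toT (Polynomial.derivative (hq al h)) := by
    rw [map_sub, map_sub, dT_C, dT_C_mul, dT_toT]
    ring
  have e5 : (ρ.I k 1 - (C (lam ^ k * ga) - C ((k:ℂ) * lam ^ k * be) * toT (hq al h)))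
      + (X 1 + C ((k:ℂ) * al))
        * dT (ρ.I k 1 - (C (lam ^ k * ga) - C ((k:ℂ) * lam ^ k * be) * toT (hq al h))) = 0 := by
    rw [hdD]
    have tk := toTkey al h
    simp only [Int.cast_neg, neg_mul, map_neg, map_mul, map_sub, map_one] at e3 ⊢
    linear_combination e3 + (C (k:ℂ) * C (lam ^ k) * C be) * tk
  have e6 := injODE ((k:ℂ) * al) _ e5
  rw [sub_eq_zero] at e6
  exact e6

end Main2

end Aux

/-- Let `λ ∈ ℂ*`, `α ∈ ℂ`, `h(t) ∈ ℂ[t]`, and let `M` be an `𝔏`-module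
with underlying space `ℂ[x,y]` on which `L_m` and `M_m` act by the `Φ`-formulas. Let
`β, γ ∈ ℂ` be the constants with `S₀·1 = β` and `I₀·1 = γ`. Then for every `m ∈ ℤ`,
`I_m·1 = λ^m (γ - m β q(y))`, where `q(t) = (h(t)-h(α))/(t-α)` is the polynomial quotient
of `h(t)-h(α)` by `t-α`. -/
theorem stmt14 (lam : ℂ) (hlam : lam ≠ 0) (al : ℂ) (h : Polynomial ℂ)
    (ρ : LAction P2)
    (hL : ∀ m : ℤ, ρ.L m = opL lam al h m)
    (hM : ∀ m : ℤ, ρ.M m = opM lam al m)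
    (be ga : ℂ) (hbe : ρ.S 0 (1 : P2) = MvPolynomial.C be)
    (hga : ρ.I 0 (1 : P2) = MvPolynomial.C ga) :
    ∀ m : ℤ, ρ.I m (1 : P2)
      = MvPolynomial.C (lam ^ m) *
          (MvPolynomial.C ga - MvPolynomial.C ((m : ℂ) * be) * toT (hq al h)) := by
  intro m
  rw [Aux.I_one lam al h ρ hlam hL hM be ga hbe hga m]
  simp only [map_mul]
  ring

end
end
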